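/- arXiv:1304.7121 — 13 statements merged into one kernel-verified Lean document; each statement's English description precedes it below -/
import Mathlib

section
/- Let α > 1 and b > 0 be reals, and let x* = (b/(α−1))^(1/α). For all reals x > 0 and y > 0 with x + y ≤ x*, it holds that (x^α + b) + (y^α + b) > (x+y)^α + b. (Merging two machines whose combined load is at most x* strictly decreases the total power consumption.) -/
/-!
Put `s = x + y`. The tangent line of `t ↦ t ^ α` at `s`, evaluated at `x` and at `y`, gives the
strict bound `x ^ α + y ^ α > (2 - α) s ^ α`, so merging saves more than `b - (α - 1) s ^ α`,
which is nonnegative exactly when `s ≤ x*`.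
-/

theorem two_sub_mul_rpow_add_lt_rpow_add_rpow {p x y : ℝ} (hp : 1 < p) (hx : 0 < x) (hy : 0 < y) :
    (2 - p) * (x + y) ^ p < x ^ p + y ^ p := by
  have hs : 0 < x + y := add_pos hx hy
  have bernoulli : ∀ t, 0 ≤ t → t < 1 → 1 + p * (t - 1) < t ^ p := fun t ht₀ ht₁ => by
    simpa using one_add_mul_self_lt_rpow_one_add (s := t - 1) (by linarith) (by linarith) hp
  have hxs := bernoulli (x / (x + y)) (by positivity) ((div_lt_one hs).2 (by linarith))
  have hys := bernoulli (y / (x + y)) (by positivity) ((div_lt_one hs).2 (by linarith))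
  have hsum : p * (x / (x + y) - 1) + p * (y / (x + y) - 1) = -p := by
    field_simp
    ring
  have key : 2 - p < (x ^ p + y ^ p) / (x + y) ^ p := by
    rw [add_div, ← Real.div_rpow hx.le hs.le, ← Real.div_rpow hy.le hs.le]
    linarith
  rwa [lt_div_iff₀ (by positivity)] at key

/-- For α > 1, b > 0, x* = (b/(α−1))^(1/α), and x, y > 0 with
x + y ≤ x*, merging strictly decreases the power:
(x^α + b) + (y^α + b) > (x+y)^α + b. -/
theorem stmt1 (α b : ℝ) (hα : 1 < α) (hb : 0 < b)
    (x y : ℝ) (hx : 0 < x) (hy : 0 < y)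
    (hxy : x + y ≤ (b / (α - 1)) ^ (1 / α)) :
    (x ^ α + b) + (y ^ α + b) > (x + y) ^ α + b := by
  have hα₁ : 0 < α - 1 := by linarith
  have hmerged : (α - 1) * (x + y) ^ α ≤ b := by
    rw [one_div, Real.le_rpow_inv_iff_of_pos (by linarith) (by positivity) (by linarith),
      le_div_iff₀ hα₁] at hxy
    linarith
  linarith [two_sub_mul_rpow_add_lt_rpow_add_rpow hα hx hy]
end

section
/- Let α > 1 and b > 0 be reals, let x* = (b/(α−1))^(1/α), and let φ* = ((x*)^α + b)/x*. Let k ≥ 1 be an integer and x₁, …, x_k positive reals such that x_i ≠ x* for at least one i. Then Σ_{i=1}^{k} (x_i^α + b) > φ* · Σ_{i=1}^{k} x_i. (Any assignment in which some nonempty machine has load different from the optimal load x* consumes strictly more power than the optimal power rate times the total load.) -/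
open Real

lemma key_le (α b t x : ℝ) (hα : 1 < α) (ht : 0 < t) (hbt : b = (α - 1) * t ^ α)
    (hx : 0 < x) : ((t ^ α + b) / t) * x ≤ x ^ α + b := by
  have htα : (0:ℝ) < t ^ α := Real.rpow_pos_of_pos ht α
  have hdiv : (x / t) ^ α * t ^ α = x ^ α := by
    rw [← Real.mul_rpow (by positivity) ht.le, div_mul_cancel₀ _ ht.ne']
  have hs : (-1:ℝ) ≤ x / t - 1 := by
    have : 0 < x / t := div_pos hx ht; linarith
  have h1 := one_add_mul_self_le_rpow_one_add hs hα.le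
  have h1' : (1 + α * (x / t - 1)) * t ^ α ≤ x ^ α := by
    calc (1 + α * (x / t - 1)) * t ^ α ≤ (1 + (x / t - 1)) ^ α * t ^ α :=
          mul_le_mul_of_nonneg_right h1 htα.le
      _ = x ^ α := by rw [show 1 + (x / t - 1) = x / t by ring, hdiv]
  have heq : ((t ^ α + b) / t) * x = (1 + α * (x / t - 1)) * t ^ α + b := by
    rw [hbt]; field_simp; ring
  linarith

lemma key_lt (α b t x : ℝ) (hα : 1 < α) (ht : 0 < t) (hbt : b = (α - 1) * t ^ α)
    (hx : 0 < x) (hne : x ≠ t) : ((t ^ α + b) / t) * x < x ^ α + b := by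
  have htα : (0:ℝ) < t ^ α := Real.rpow_pos_of_pos ht α
  have hdiv : (x / t) ^ α * t ^ α = x ^ α := by
    rw [← Real.mul_rpow (by positivity) ht.le, div_mul_cancel₀ _ ht.ne']
  have hs : (-1:ℝ) ≤ x / t - 1 := by
    have : 0 < x / t := div_pos hx ht; linarith
  have hs' : x / t - 1 ≠ 0 := by
    intro h
    apply hne
    have : x / t = 1 := by linarith
    field_simp at this; linarith
  have h1 := one_add_mul_self_lt_rpow_one_add hs hs' hα
  have h1' : (1 + α * (x / t - 1)) * t ^ α < x ^ α := by
    calc (1 + α * (x / t - 1)) * t ^ α < (1 + (x / t - 1)) ^ α * t ^ α :=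
          mul_lt_mul_of_pos_right h1 htα
      _ = x ^ α := by rw [show 1 + (x / t - 1) = x / t by ring, hdiv]
  have heq : ((t ^ α + b) / t) * x = (1 + α * (x / t - 1)) * t ^ α + b := by
    rw [hbt]; field_simp; ring
  linarith

/-- For α > 1, b > 0, x* = (b/(α−1))^(1/α), φ* = ((x*)^α + b)/x*,
k ≥ 1 and positive reals x₁, …, x_k with some x_i ≠ x*, we have
Σ (x_i^α + b) > φ* · Σ x_i. -/
theorem stmt4 (α b : ℝ) (hα : 1 < α) (hb : 0 < b)
    (k : ℕ) (hk : 1 ≤ k) (x : Fin k → ℝ) (hx : ∀ i, 0 < x i)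
    (hne : ∃ i, x i ≠ (b / (α - 1)) ^ (1 / α)) :
    ∑ i, (x i ^ α + b) >
      ((((b / (α - 1)) ^ (1 / α)) ^ α + b) / ((b / (α - 1)) ^ (1 / α))) * ∑ i, x i := by
  set t := (b / (α - 1)) ^ (1 / α) with ht_def
  have hq : (0:ℝ) < b / (α - 1) := div_pos hb (by linarith)
  have ht : 0 < t := Real.rpow_pos_of_pos hq _
  have htα : t ^ α = b / (α - 1) := by
    rw [ht_def, one_div]
    exact Real.rpow_inv_rpow hq.le (by positivity)
  have hbt : b = (α - 1) * t ^ α := by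
    rw [htα, mul_div_cancel₀]; linarith
  rw [Finset.mul_sum]
  obtain ⟨j, hj⟩ := hne
  apply Finset.sum_lt_sum
  · intro i _
    exact key_le α b t (x i) hα ht hbt (hx i)
  · exact ⟨j, Finset.mem_univ j, key_lt α b t (x j) hα ht hbt (hx j) hj⟩
end

section
/- Let α > 1 and B > 0 be reals, set b = B^α·(α−1), and let k ≥ 1 be an integer. Let x₁, …, x_r be positive reals with x₁ + ⋯ + x_r = k·B such that x_i ≠ B for at least one i. Then Σ_{i=1}^{r} (x_i^α + b) > k·(B^α + b). Moreover, if r = k and x_i = B for all i, then Σ_{i=1}^{r} (x_i^α + b) = k·(B^α + b). (This is the gap underlying the reduction from 3-Partition that proves strong NP-hardness of the VMA problems: total power k·f(B) is achievable exactly when the loads can be partitioned into parts of load B.) -/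
open Real

lemma tangent_aux (α B : ℝ) (hα : 1 < α) (hB : 0 < B) (x : ℝ) (hx : 0 < x) :
    x ^ α = B ^ α * (1 + (x / B - 1)) ^ α := by
  rw [show (1 + (x / B - 1)) = x / B by ring, ← Real.mul_rpow hB.le (div_pos hx hB).le]
  congr 1
  field_simp

lemma tangent_le (α B : ℝ) (hα : 1 < α) (hB : 0 < B) (x : ℝ) (hx : 0 < x) :
    α * B ^ α * (x / B) ≤ x ^ α + B ^ α * (α - 1) := by
  have hs : -1 ≤ x / B - 1 := by have := (div_pos hx hB); linarith
  have h := one_add_mul_self_le_rpow_one_add hs hα.le (s := x / B - 1)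
  have hBα : 0 < B ^ α := Real.rpow_pos_of_pos hB α
  rw [tangent_aux α B hα hB x hx]
  nlinarith [mul_le_mul_of_nonneg_left h hBα.le]

lemma tangent_lt (α B : ℝ) (hα : 1 < α) (hB : 0 < B) (x : ℝ) (hx : 0 < x) (hxB : x ≠ B) :
    α * B ^ α * (x / B) < x ^ α + B ^ α * (α - 1) := by
  have hs : -1 ≤ x / B - 1 := by have := (div_pos hx hB); linarith
  have hs' : x / B - 1 ≠ 0 := by
    intro h
    apply hxB
    field_simp at h
    linarith
  have h := one_add_mul_self_lt_rpow_one_add hs hs' hα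
  have hBα : 0 < B ^ α := Real.rpow_pos_of_pos hB α
  rw [tangent_aux α B hα hB x hx]
  nlinarith [mul_lt_mul_of_pos_left h hBα]

/-- Let α > 1, B > 0, b = B^α·(α−1), k ≥ 1.
(i) Positive loads x₁, …, x_r summing to k·B with some x_i ≠ B have total power
strictly larger than k·(B^α + b).
(ii) If r = k and all x_i = B then the total power equals k·(B^α + b). -/
theorem stmt5 (α B : ℝ) (hα : 1 < α) (hB : 0 < B)
    (b : ℝ) (hb : b = B ^ α * (α - 1))
    (k : ℕ) (hk : 1 ≤ k) :
    (∀ (r : ℕ) (x : Fin r → ℝ), (∀ i, 0 < x i) → ∑ i, x i = k * B →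
      (∃ i, x i ≠ B) → ∑ i, (x i ^ α + b) > k * (B ^ α + b)) ∧
    (∀ x : Fin k → ℝ, (∀ i, x i = B) → ∑ i, (x i ^ α + b) = k * (B ^ α + b)) := by
  constructor
  · intro r x hpos hsum ⟨i₀, hi₀⟩
    have key : ∑ i, α * B ^ α * (x i / B) < ∑ i, (x i ^ α + b) := by
      apply Finset.sum_lt_sum
      · intro i _
        rw [hb]; exact tangent_le α B hα hB (x i) (hpos i)
      · exact ⟨i₀, Finset.mem_univ i₀, by rw [hb]; exact tangent_lt α B hα hB _ (hpos i₀) hi₀⟩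
    have hleft : ∑ i, α * B ^ α * (x i / B) = k * (B ^ α + b) := by
      rw [← Finset.mul_sum, ← Finset.sum_div, hsum, hb]
      field_simp
      ring
    linarith
  · intro x hx
    simp only [hx]
    rw [Finset.sum_const, Finset.card_univ, Fintype.card_fin, nsmul_eq_mul]
end

section
/- Let α > 1 and C > 0 be reals and set b = C^α·(α−1). Let x₁, …, x_k be positive reals with x_i ≤ C for all i, x₁ + ⋯ + x_k = 2C, and x_i ≠ C for all i. Then Σ_{i=1}^{k} (x_i^α + b) ≥ 3b + 3·(2C/3)^α, and moreover 3b + 3·(2C/3)^α = (3/2)·((α−1+(2/3)^α)/α)·(2b + 2C^α). (This is the gap underlying the reduction from the Partition problem showing that no polynomial-time algorithm approximates (C,·)-VMA within ratio less than (3/2)·(α−1+(2/3)^α)/α unless P = NP: if the load 2C cannot be split into two parts of load exactly C, then every capacity-feasible assignment costs at least the stated factor times the cost 2b + 2C^α of the two-machine balanced assignment.) -/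
open Finset Set

/-- monotonicity of g(s) = b*s + A * s^(1-α) on [2,∞), where b = C^α(α-1), A = (2C)^α -/
lemma aux_mono (α C : ℝ) (hα : 1 < α) (hC : 0 < C) :
    MonotoneOn (fun s : ℝ => C ^ α * (α - 1) * s + (2 * C) ^ α * s ^ (1 - α)) (Set.Ici 2) := by
  apply monotoneOn_of_deriv_nonneg (convex_Ici 2)
  · apply ContinuousOn.add (continuousOn_const.mul continuousOn_id)
    apply ContinuousOn.mul continuousOn_const
    intro s hs
    exact (Real.continuousAt_rpow_const s (1 - α) (Or.inl (by simp at hs; linarith))).continuousWithinAt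
  · intro s hs
    simp only [interior_Ici, Set.mem_Ioi] at hs
    have hs0 : (0:ℝ) < s := by linarith
    exact (((hasDerivAt_id s).const_mul _).add
      ((Real.hasDerivAt_rpow_const (p := 1 - α) (Or.inl hs0.ne')).const_mul
        ((2 * C) ^ α))).differentiableAt.differentiableWithinAt
  · intro s hs
    simp only [interior_Ici, Set.mem_Ioi] at hs
    have hs0 : (0:ℝ) < s := by linarith
    have hd : HasDerivAt (fun s : ℝ => C ^ α * (α - 1) * s + (2 * C) ^ α * s ^ (1 - α))
        (C ^ α * (α - 1) * 1 + (2 * C) ^ α * ((1 - α) * s ^ (1 - α - 1))) s := by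
      exact ((hasDerivAt_id s).const_mul _).add
        ((Real.hasDerivAt_rpow_const (Or.inl hs0.ne')).const_mul _)
    rw [hd.deriv]
    have key : (2 * C) ^ α * s ^ (1 - α - 1) ≤ C ^ α := by
      have h1 : s ^ (1 - α - 1) = (s ^ α)⁻¹ := by
        rw [show (1:ℝ) - α - 1 = -α by ring, Real.rpow_neg hs0.le]
      rw [h1, mul_inv_le_iff₀ (Real.rpow_pos_of_pos hs0 α)]
      calc (2 * C) ^ α = 2 ^ α * C ^ α := Real.mul_rpow (by norm_num) hC.le
        _ ≤ s ^ α * C ^ α :=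
            mul_le_mul_of_nonneg_right
              (Real.rpow_le_rpow (by norm_num) hs.le (by linarith))
              (Real.rpow_nonneg hC.le α)
        _ = C ^ α * s ^ α := by ring
    nlinarith [Real.rpow_pos_of_pos hC α]

/-- Let α > 1, C > 0, b = C^α·(α−1). If x₁, …, x_k are positive,
each at most C, sum to 2C and none equals C, then
Σ (x_i^α + b) ≥ 3b + 3·(2C/3)^α, and
3b + 3·(2C/3)^α = (3/2)·((α−1+(2/3)^α)/α)·(2b + 2C^α). -/
theorem stmt6 (α C : ℝ) (hα : 1 < α) (hC : 0 < C)
    (b : ℝ) (hb : b = C ^ α * (α - 1))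
    (k : ℕ) (x : Fin k → ℝ) (hx : ∀ i, 0 < x i) (hxC : ∀ i, x i ≤ C)
    (hsum : ∑ i, x i = 2 * C) (hne : ∀ i, x i ≠ C) :
    ∑ i, (x i ^ α + b) ≥ 3 * b + 3 * (2 * C / 3) ^ α ∧
    3 * b + 3 * (2 * C / 3) ^ α =
      (3 / 2) * ((α - 1 + (2 / 3) ^ α) / α) * (2 * b + 2 * C ^ α) := by
  have hxlt : ∀ i, x i < C := fun i => lt_of_le_of_ne (hxC i) (hne i)
  have hk3 : 3 ≤ k := by
    by_contra h
    push_neg at h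
    interval_cases k
    · simp at hsum; linarith
    · rw [Fin.sum_univ_one] at hsum
      linarith [hxlt 0]
    · rw [Fin.sum_univ_two] at hsum
      linarith [hxlt 0, hxlt 1]
  have hK : (3:ℝ) ≤ (k:ℝ) := by exact_mod_cast hk3
  have hK0 : (0:ℝ) < (k:ℝ) := by linarith
  -- Jensen
  have jensen : (k:ℝ) * (2 * C / k) ^ α ≤ ∑ i, x i ^ α := by
    have h := Real.rpow_arith_mean_le_arith_mean_rpow Finset.univ
      (fun _ : Fin k => 1 / (k:ℝ)) x (fun i _ => by positivity)
      (by rw [Finset.sum_const]; simp; field_simp)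
      (fun i _ => (hx i).le) hα.le
    have h1 : ∑ i, (1 / (k:ℝ)) * x i = 2 * C / k := by
      rw [← Finset.mul_sum, hsum]; ring
    have h2 : ∑ i, (1 / (k:ℝ)) * x i ^ α = (∑ i, x i ^ α) / k := by
      rw [← Finset.mul_sum]; ring
    rw [h1, h2] at h
    rw [mul_comm]
    exact (le_div_iff₀ hK0).mp h
  have hrw : ∀ s : ℝ, 0 < s → s * (2 * C / s) ^ α = (2 * C) ^ α * s ^ (1 - α) := by
    intro s hs
    rw [Real.div_rpow (by positivity) hs.le, Real.rpow_sub hs, Real.rpow_one]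
    field_simp
  have hmono := aux_mono α C hα hC (Set.mem_Ici.mpr (by norm_num : (2:ℝ) ≤ 3))
    (Set.mem_Ici.mpr (by linarith : (2:ℝ) ≤ (k:ℝ))) hK
  simp only at hmono
  rw [← hb] at hmono
  constructor
  · have hsum' : ∑ i, (x i ^ α + b) = (∑ i, x i ^ α) + k * b := by
      rw [Finset.sum_add_distrib, Finset.sum_const]
      simp [mul_comm]
    rw [hsum']
    have e1 : (3:ℝ) * (2 * C / 3) ^ α = (2 * C) ^ α * (3:ℝ) ^ (1 - α) := by
      have := hrw 3 (by norm_num); linarith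
    have e2 : (k:ℝ) * (2 * C / k) ^ α = (2 * C) ^ α * (k:ℝ) ^ (1 - α) := hrw _ hK0
    nlinarith
  · have h1 : (2 * C / 3) ^ α = C ^ α * (2 / 3) ^ α := by
      rw [show 2 * C / 3 = C * (2/3) by ring, Real.mul_rpow hC.le (by norm_num)]
    rw [h1, hb]
    field_simp
    ring
end

section
/- Let α > 1, b > 0 and L > 0 be reals and let x* = (b/(α−1))^(1/α). For all reals k₁, k₂ with 0 < k₁ ≤ k₂ and L/k₁ ≤ x*, it holds that k₁·b + k₁·(L/k₁)^α ≤ k₂·b + k₂·(L/k₂)^α. (For a fixed total load L evenly balanced among k machines, the power k·b + k·(L/k)^α is non-decreasing in k as long as the per-machine load does not exceed x*; hence fewer machines are better when the load per machine stays below x*.) -/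
/-!
Writing `x = L / k` for the load per machine, the total power is
`k * b + k * x ^ α = L * ((x ^ α + b) / x)`, so it suffices that the power per unit of load
`(x ^ α + b) / x` is antitone for `0 < x ≤ x*`. Its derivative is `((α - 1) * x ^ α - b) / x ^ 2`,
which is nonpositive exactly when `x ^ α ≤ b / (α - 1) = x* ^ α`.
-/

open Set

theorem hasDerivAt_rpow_add_const_div_self {α b x : ℝ} (hx : 0 < x) :
    HasDerivAt (fun y : ℝ => (y ^ α + b) / y) (((α - 1) * x ^ α - b) / x ^ 2) x := by
  have hpow : HasDerivAt (fun y : ℝ => y ^ α + b) (α * x ^ (α - 1)) x :=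
    (Real.hasDerivAt_rpow_const (Or.inl hx.ne')).add_const b
  refine (hpow.div (hasDerivAt_id x) hx.ne').congr_deriv ?_
  rw [Real.rpow_sub_one hx.ne', id]
  field_simp
  ring

theorem antitoneOn_rpow_add_const_div_self {α b : ℝ} (hα : 1 < α) (hb : 0 ≤ b) :
    AntitoneOn (fun x : ℝ => (x ^ α + b) / x) (Ioc 0 ((b / (α - 1)) ^ (1 / α))) := by
  have hα₁ : 0 < α - 1 := sub_pos.mpr hα
  have hderiv : ∀ x ∈ Ioc (0 : ℝ) ((b / (α - 1)) ^ (1 / α)), HasDerivAt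
      (fun y : ℝ => (y ^ α + b) / y) (((α - 1) * x ^ α - b) / x ^ 2) x :=
    fun x hx => hasDerivAt_rpow_add_const_div_self hx.1
  apply antitoneOn_of_deriv_nonpos (convex_Ioc _ _)
  · exact fun x hx => (hderiv x hx).continuousAt.continuousWithinAt
  · rw [interior_Ioc]
    exact fun x hx => (hderiv x (Ioo_subset_Ioc_self hx)).differentiableAt.differentiableWithinAt
  · rw [interior_Ioc]
    intro x hx
    rw [(hderiv x (Ioo_subset_Ioc_self hx)).deriv]
    have hpow : x ^ α ≤ b / (α - 1) := by
      calc x ^ α ≤ ((b / (α - 1)) ^ (1 / α)) ^ α :=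
            Real.rpow_le_rpow hx.1.le hx.2.le (by linarith)
        _ = b / (α - 1) := by
            rw [one_div, Real.rpow_inv_rpow (by positivity) (by linarith)]
    have hnum : (α - 1) * x ^ α - b ≤ 0 := by
      rw [le_div_iff₀' hα₁] at hpow
      linarith
    exact div_nonpos_of_nonpos_of_nonneg hnum (sq_nonneg x)

theorem mul_add_mul_div_rpow_eq {α b L k : ℝ} (hL : L ≠ 0) (hk : k ≠ 0) :
    k * b + k * (L / k) ^ α = L * (((L / k) ^ α + b) / (L / k)) := by
  field_simp
  ring

/-- For α > 1, b > 0, L > 0, x* = (b/(α−1))^(1/α), and reals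
0 < k₁ ≤ k₂ with L/k₁ ≤ x*, it holds that
k₁·b + k₁·(L/k₁)^α ≤ k₂·b + k₂·(L/k₂)^α. -/
theorem stmt7 (α b L : ℝ) (hα : 1 < α) (hb : 0 < b) (hL : 0 < L)
    (k₁ k₂ : ℝ) (hk₁ : 0 < k₁) (hk : k₁ ≤ k₂)
    (hload : L / k₁ ≤ (b / (α - 1)) ^ (1 / α)) :
    k₁ * b + k₁ * (L / k₁) ^ α ≤ k₂ * b + k₂ * (L / k₂) ^ α := by
  have hk₂ : 0 < k₂ := hk₁.trans_le hk
  have hload_le : L / k₂ ≤ L / k₁ := div_le_div_of_nonneg_left hL.le hk₁ hk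
  rw [mul_add_mul_div_rpow_eq hL.ne' hk₁.ne', mul_add_mul_div_rpow_eq hL.ne' hk₂.ne']
  exact mul_le_mul_of_nonneg_left (antitoneOn_rpow_add_const_div_self hα hb.le
    ⟨div_pos hL hk₂, hload_le.trans hload⟩ ⟨div_pos hL hk₁, hload⟩ hload_le) hL.le
end

section
/- Let α > 1, b > 0 and C > 0 be reals with C ≤ x* where x* = (b/(α−1))^(1/α). Let x₁, …, x_{m*} be positive reals with x_i ≤ C for all i and total load L = x₁ + ⋯ + x_{m*}, and let m̄ be an integer with 1 ≤ m̄ ≤ m* and L ≤ m̄·C. Then Σ_{i=1}^{m*} (x_i^α + b) ≥ m̄·b + m̄·(L/m̄)^α. (When x* ≥ C, the power of any capacity-feasible assignment is lower bounded by the power of the assignment that evenly distributes the total load among m̄ machines, where m̄ is the minimum number of machines needed, i.e., the optimal bin-packing solution.) -/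
/-!
Let `y = L / m̄ ≤ C ≤ x*`. By convexity each `x_i ^ α` lies above the tangent of `t ↦ t ^ α`
at `y`. Summing over the `m*` machines and using `L = m̄ y`, this lower bound exceeds
`m̄ b + m̄ y ^ α` by `(m* - m̄) (b - (α - 1) y ^ α)`, which is nonnegative precisely because
`y ≤ x*`, the minimiser of `(t ^ α + b) / t`.
-/

open Finset

theorem Real.rpow_add_mul_rpow_sub_one_mul_sub_le {p x y : ℝ} (hp : 1 ≤ p) (hx : 0 ≤ x)
    (hy : 0 < y) : y ^ p + p * y ^ (p - 1) * (x - y) ≤ x ^ p := by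
  have hbern := one_add_mul_self_le_rpow_one_add
    (show -1 ≤ x / y - 1 by linarith [div_nonneg hx hy.le]) hp
  rw [add_sub_cancel, Real.div_rpow hx hy.le, le_div_iff₀ (Real.rpow_pos_of_pos hy p)] at hbern
  have hyp : y ^ p = y ^ (p - 1) * y := by
    rw [← Real.rpow_add_one hy.ne', sub_add_cancel]
  calc y ^ p + p * y ^ (p - 1) * (x - y) = (1 + p * (x / y - 1)) * y ^ p := by
        rw [hyp]; field_simp
    _ ≤ x ^ p := hbern

theorem sub_one_mul_rpow_le_of_le_rpow_one_div {α b y : ℝ} (hα : 1 < α) (hb : 0 ≤ b)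
    (hy : 0 ≤ y) (h : y ≤ (b / (α - 1)) ^ (1 / α)) : (α - 1) * y ^ α ≤ b := by
  have hα1 : 0 < α - 1 := sub_pos.mpr hα
  rw [one_div, Real.le_rpow_inv_iff_of_pos hy (by positivity) (by linarith),
    le_div_iff₀ hα1] at h
  linarith

theorem mul_add_mul_div_rpow_le_sum_rpow_add {ι : Type*} [Fintype ι] {α b m : ℝ} (hα : 1 ≤ α)
    (x : ι → ℝ) (hx : ∀ i, 0 ≤ x i) (hm : 0 < m) (hmι : m ≤ Fintype.card ι)
    (hload : (α - 1) * ((∑ i, x i) / m) ^ α ≤ b) :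
    m * b + m * ((∑ i, x i) / m) ^ α ≤ ∑ i, (x i ^ α + b) := by
  have hy0 : 0 ≤ (∑ i, x i) / m := div_nonneg (sum_nonneg fun i _ => hx i) hm.le
  have hL : ∑ i, x i = m * ((∑ i, x i) / m) := (mul_div_cancel₀ _ hm.ne').symm
  generalize (∑ i, x i) / m = y at hy0 hL hload ⊢
  have hsum : ∑ i, (x i ^ α + b) = ∑ i, x i ^ α + Fintype.card ι * b := by
    simp [sum_add_distrib]
  rw [hsum]
  rcases hy0.eq_or_lt with rfl | hy
  · have hpow : 0 ≤ ∑ i, x i ^ α := sum_nonneg fun i _ => Real.rpow_nonneg (hx i) α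
    rw [Real.zero_rpow (by linarith)] at hload ⊢
    nlinarith
  have htangent : ∑ i, (y ^ α + α * y ^ (α - 1) * (x i - y)) ≤ ∑ i, x i ^ α :=
    sum_le_sum fun i _ => Real.rpow_add_mul_rpow_sub_one_mul_sub_le hα (hx i) hy
  have hyα : y ^ (α - 1) * y = y ^ α := by rw [← Real.rpow_add_one hy.ne', sub_add_cancel]
  simp only [sum_add_distrib, ← mul_sum, sum_sub_distrib, sum_const, card_univ,
    nsmul_eq_mul, hL] at htangent
  have hlinear : α * y ^ (α - 1) * (m * y - Fintype.card ι * y)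
      = α * (m - Fintype.card ι) * y ^ α := by
    rw [← hyα]; ring
  nlinarith [mul_nonneg (sub_nonneg.mpr hmι) (sub_nonneg.mpr hload)]

theorem stmt8_general (α b C : ℝ) (hα : 1 < α) (hb : 0 < b)
    (hCx : C ≤ (b / (α - 1)) ^ (1 / α))
    (mstar : ℕ) (x : Fin mstar → ℝ) (hx : ∀ i, 0 < x i)
    (L : ℝ) (hL : L = ∑ i, x i)
    (mbar : ℕ) (hm1 : 1 ≤ mbar) (hm2 : mbar ≤ mstar) (hLm : L ≤ mbar * C) :
    ∑ i, (x i ^ α + b) ≥ mbar * b + mbar * (L / mbar) ^ α := by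
  have hmbar : (0 : ℝ) < mbar := by exact_mod_cast hm1
  have hL0 : 0 ≤ L := hL ▸ sum_nonneg fun i _ => (hx i).le
  have hload : (α - 1) * (L / mbar) ^ α ≤ b :=
    sub_one_mul_rpow_le_of_le_rpow_one_div hα hb.le (div_nonneg hL0 hmbar.le)
      (((div_le_iff₀' hmbar).mpr hLm).trans hCx)
  subst hL
  exact mul_add_mul_div_rpow_le_sum_rpow_add hα.le x (fun i => (hx i).le) hmbar
    (by simpa using hm2) hload

/-- Let α > 1, b > 0, C > 0 with C ≤ x* = (b/(α−1))^(1/α).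
Let x₁, …, x_{m*} be positive loads each at most C with total load L, and let
m̄ be an integer with 1 ≤ m̄ ≤ m* and L ≤ m̄·C. Then
Σ (x_i^α + b) ≥ m̄·b + m̄·(L/m̄)^α. -/
theorem stmt8 (α b C : ℝ) (hα : 1 < α) (hb : 0 < b) (hC : 0 < C)
    (hCx : C ≤ (b / (α - 1)) ^ (1 / α))
    (mstar : ℕ) (x : Fin mstar → ℝ) (hx : ∀ i, 0 < x i) (hxC : ∀ i, x i ≤ C)
    (L : ℝ) (hL : L = ∑ i, x i)
    (mbar : ℕ) (hm1 : 1 ≤ mbar) (hm2 : mbar ≤ mstar) (hLm : L ≤ mbar * C) :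
    ∑ i, (x i ^ α + b) ≥ mbar * b + mbar * (L / mbar) ^ α :=
  stmt8_general α b C hα hb hCx mstar x hx L hL mbar hm1 hm2 hLm
end

section
/- Let α > 1, and let b, C, ε, L be positive reals. Let m̄ ≥ 1 be an integer with L ≤ m̄·C, and let m̂ be a real with m̂ ≤ (1+ε)·m̄ + 1. Then (m̂·b + (L/C)·C^α) / (m̄·b + m̄·(C/2)^α) < 1 + ε + C^α/b + 1/m̄. (This inequality is the core of the proof that, when x* ≥ C, the bin-packing-based offline algorithm for (C,·)-VMA — which uses m̂ ≤ (1+ε)·m̄+1 machines, where m̄ is the optimal number of bins of size C — achieves approximation ratio less than 1 + ε + C^α/b + 1/m̄.) -/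
/-- Let α > 1 and b, C, ε, L > 0. Let m̄ ≥ 1 be an integer with
L ≤ m̄·C, and m̂ a real with m̂ ≤ (1+ε)·m̄ + 1. Then
(m̂·b + (L/C)·C^α) / (m̄·b + m̄·(C/2)^α) < 1 + ε + C^α/b + 1/m̄. -/
theorem stmt9 (α b C ε L : ℝ) (hα : 1 < α) (hb : 0 < b) (hC : 0 < C)
    (hε : 0 < ε) (hL : 0 < L)
    (mbar : ℕ) (hmbar : 1 ≤ mbar) (hLm : L ≤ mbar * C)
    (mhat : ℝ) (hmhat : mhat ≤ (1 + ε) * mbar + 1) :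
    (mhat * b + (L / C) * C ^ α) / (mbar * b + mbar * (C / 2) ^ α) <
      1 + ε + C ^ α / b + 1 / mbar := by
  have hm0 : (0:ℝ) < mbar := by exact_mod_cast hmbar
  have hCa : (0:ℝ) < C ^ α := Real.rpow_pos_of_pos hC α
  have hC2 : (0:ℝ) < (C / 2) ^ α := Real.rpow_pos_of_pos (by linarith) α
  have hD : (0:ℝ) < mbar * b + mbar * (C / 2) ^ α := by positivity
  have hLC : L / C ≤ (mbar : ℝ) := (div_le_iff₀ hC).mpr hLm
  have h1 : C ^ α / b * b = C ^ α := div_mul_cancel₀ _ hb.ne'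
  have h2 : 1 / (mbar : ℝ) * mbar = 1 := one_div_mul_cancel hm0.ne'
  rw [div_lt_iff₀ hD]
  have hcb : 0 < C ^ α / b := div_pos hCa hb
  have hmm : 0 < 1 / (mbar : ℝ) := by positivity
  nlinarith [mul_pos hcb (mul_pos hm0 hC2), mul_pos hmm (mul_pos hm0 hC2),
    mul_le_mul_of_nonneg_right hLC hCa.le, mul_le_mul_of_nonneg_right hmhat hb.le,
    mul_pos hm0 hC2, mul_pos hε (mul_pos hm0 hb), mul_pos hε (mul_pos hm0 hC2)]
end

section
/- Let α > 1, ε > 0 and x* > 0 be reals and set b = (x*)^α·(α−1). Let m* and m̄ be positive integers and L > 0 a real with L/m* > x*/2 and L ≤ m̄·x*, and let m̂ be a real with m̂ ≤ (1+ε)·m̄ + 1. Then (m̂·b + (L/x*)·(x*)^α) / (m*·b + m*·(L/m*)^α) < (m̄/m*)·((1+ε) + 1/(α−1)) + 1/m*. (This inequality is the core of the proof that, when x* < C, the bin-packing-based offline algorithm for (C,·)-VMA with bins of size x* achieves approximation ratio less than (m̄/m*)·(1+ε+1/(α−1)) + 1/m*, where m* is the number of machines used by an optimal solution and m̄ is the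 optimal number of bins of size x*.) -/
/-- Let α > 1, ε > 0, x* > 0, b = (x*)^α·(α−1). Let m*, m̄ be
positive integers and L > 0 with L/m* > x*/2 and L ≤ m̄·x*, and let m̂ be a real
with m̂ ≤ (1+ε)·m̄ + 1. Then
(m̂·b + (L/x*)·(x*)^α) / (m*·b + m*·(L/m*)^α) < (m̄/m*)·((1+ε) + 1/(α−1)) + 1/m*. -/
theorem stmt10 (α ε xstar : ℝ) (hα : 1 < α) (hε : 0 < ε) (hx : 0 < xstar)
    (b : ℝ) (hb : b = xstar ^ α * (α - 1))
    (mstar mbar : ℕ) (hms : 0 < mstar) (hmb : 0 < mbar)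
    (L : ℝ) (hL : 0 < L) (hL1 : L / mstar > xstar / 2) (hL2 : L ≤ mbar * xstar)
    (mhat : ℝ) (hmhat : mhat ≤ (1 + ε) * mbar + 1) :
    (mhat * b + (L / xstar) * xstar ^ α) / (mstar * b + mstar * (L / mstar) ^ α) <
      (mbar / mstar : ℝ) * ((1 + ε) + 1 / (α - 1)) + 1 / mstar := by
  have hM : (0:ℝ) < mstar := by exact_mod_cast hms
  have hMb : (0:ℝ) < mbar := by exact_mod_cast hmb
  have hA : (0:ℝ) < α - 1 := by linarith
  have hxa : (0:ℝ) < xstar ^ α := Real.rpow_pos_of_pos hx α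
  have hP : (0:ℝ) < (L / mstar) ^ α := Real.rpow_pos_of_pos (div_pos hL hM) α
  have hbpos : 0 < b := by rw [hb]; positivity
  have hD : 0 < (mstar:ℝ) * b + mstar * (L / mstar) ^ α := by positivity
  rw [div_lt_iff₀ hD]
  have hR : ((mbar / mstar : ℝ) * ((1 + ε) + 1 / (α - 1)) + 1 / mstar) *
      ((mstar:ℝ) * b + mstar * (L / mstar) ^ α)
      = ((mbar:ℝ) * (1 + ε) + mbar / (α - 1) + 1) * (b + (L / mstar) ^ α) := by
    field_simp
  rw [hR]
  have h1 : (L / xstar) * xstar ^ α ≤ mbar * xstar ^ α := by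
    have : L / xstar ≤ mbar := by
      rw [div_le_iff₀ hx]; exact hL2
    exact mul_le_mul_of_nonneg_right this hxa.le
  have h2 : (mbar / (α - 1)) * b = mbar * xstar ^ α := by
    rw [hb]; field_simp
  have h3 : mhat * b ≤ ((1 + ε) * mbar + 1) * b :=
    mul_le_mul_of_nonneg_right hmhat hbpos.le
  have hq : 0 ≤ (mbar:ℝ) / (α - 1) := by positivity
  nlinarith [mul_pos (mul_pos (by linarith : (0:ℝ) < 1 + ε) hMb) hP,
    mul_nonneg hq hP.le]
end

section
/- Let α > 1 and b > 0 be reals, let x* = (b/(α−1))^(1/α), and let β ≥ 1 be a real with β^α ≥ α−1. Then ((2βx*)^α/4 + (βx*)^α/2 + 3b/4) / ((βx*)^α + b) ≥ 2^(α−3) + 1/4, and moreover 2^(α−3) + 1/4 ≥ 3^α/2^(α+2). (This is the first case of the lower bound for online (·,m)-VMA: if an online algorithm packs m VMs of load β·x* onto at most 3m/4 machines, its per-machine-group cost ratio against the optimum that spreads the VMs over all m machines is at least 2^(α−3) + 1/4.) -/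
lemma jensen234 (α : ℝ) (hα : 1 ≤ α) : 2 * (3:ℝ) ^ α ≤ (2:ℝ) ^ α + (4:ℝ) ^ α := by
  have h := (convexOn_rpow hα).2 (Set.mem_Ici.2 (by norm_num : (0:ℝ) ≤ 2))
    (Set.mem_Ici.2 (by norm_num : (0:ℝ) ≤ 4))
    (by norm_num : (0:ℝ) ≤ 1/2) (by norm_num : (0:ℝ) ≤ 1/2) (by norm_num)
  simp only [smul_eq_mul] at h
  norm_num at h
  nlinarith [h]

/-- Let α > 1, b > 0, x* = (b/(α−1))^(1/α), and β ≥ 1 with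
β^α ≥ α−1. Then
((2βx*)^α/4 + (βx*)^α/2 + 3b/4) / ((βx*)^α + b) ≥ 2^(α−3) + 1/4,
and 2^(α−3) + 1/4 ≥ 3^α/2^(α+2). -/
theorem stmt13 (α b : ℝ) (hα : 1 < α) (hb : 0 < b)
    (β : ℝ) (hβ : 1 ≤ β) (hβα : α - 1 ≤ β ^ α) :
    ((2 * β * ((b / (α - 1)) ^ (1 / α))) ^ α / 4 +
        (β * ((b / (α - 1)) ^ (1 / α))) ^ α / 2 + 3 * b / 4) /
      ((β * ((b / (α - 1)) ^ (1 / α))) ^ α + b) ≥ (2 : ℝ) ^ (α - 3) + 1 / 4 ∧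
    (2 : ℝ) ^ (α - 3) + 1 / 4 ≥ (3 : ℝ) ^ α / (2 : ℝ) ^ (α + 2) := by
  have hA : (0:ℝ) < α - 1 := by linarith
  have hc : (0:ℝ) < b / (α - 1) := div_pos hb hA
  set X : ℝ := (b / (α - 1)) ^ (1 / α) with hXdef
  have hX : 0 < X := Real.rpow_pos_of_pos hc _
  have hXα : X ^ α = b / (α - 1) := by
    rw [hXdef, ← Real.rpow_mul hc.le, one_div_mul_cancel (by positivity : α ≠ 0),
      Real.rpow_one]
  have hβ0 : (0:ℝ) ≤ β := by linarith
  have hP1 : (1:ℝ) ≤ β ^ α := Real.one_le_rpow hβ (by linarith)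
  have h2pos : (0:ℝ) < (2:ℝ) ^ α := Real.rpow_pos_of_pos (by norm_num) _
  have h2ge : (2:ℝ) ≤ (2:ℝ) ^ α := by
    calc (2:ℝ) = 2 ^ (1:ℝ) := (Real.rpow_one 2).symm
    _ ≤ 2 ^ α := Real.rpow_le_rpow_left_iff (by norm_num) |>.2 hα.le
  have hβX : (β * X) ^ α = β ^ α * (b / (α - 1)) := by
    rw [Real.mul_rpow hβ0 hX.le, hXα]
  have h2βX : (2 * β * X) ^ α = 2 ^ α * (β ^ α * (b / (α - 1))) := by
    rw [mul_assoc, Real.mul_rpow (by norm_num) (by positivity), hβX]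
  set y : ℝ := β ^ α * (b / (α - 1)) with hydef
  have hyb : b ≤ y := by
    have : (α - 1) * (b / (α - 1)) ≤ y := by
      apply mul_le_mul_of_nonneg_right hβα hc.le
    rwa [mul_div_cancel₀ _ (by positivity : α - 1 ≠ 0)] at this
  have h23 : (2:ℝ) ^ (α - 3) = 2 ^ α / 8 := by
    rw [Real.rpow_sub (by norm_num)]
    norm_num
  constructor
  · rw [hβX, h2βX, h23, ge_iff_le, le_div_iff₀ (by nlinarith)]
    nlinarith [mul_le_mul_of_nonneg_left hyb h2pos.le]
  · have hj := jensen234 α hα.le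
    have h4 : (4:ℝ) ^ α = 2 ^ α * 2 ^ α := by
      rw [show (4:ℝ) = 2 * 2 by norm_num, Real.mul_rpow] <;> norm_num
    have h2a2 : (2:ℝ) ^ (α + 2) = 2 ^ α * 4 := by
      rw [Real.rpow_add (by norm_num)]
      norm_num
    rw [h23, h2a2, ge_iff_le, div_le_iff₀ (by positivity)]
    nlinarith [hj, h4, h2ge]
end

section
/- Let α > 1, b > 0 and ε > 0 be reals, let x* = (b/(α−1))^(1/α), and let β > 0 be a real with β^α ≥ 4(α−1)/ε. Then (3βx*)^α/4 ≥ (3^α/(2^(α+2)+ε)) · ((2βx*)^α + b). (This is the second case of the lower bound for online (·,m)-VMA: if an online algorithm spreads the first batch of VMs of load β·x* over more than 3m/4 machines, then after a second batch of m/2 VMs of load 2β·x* it has at least m/4 machines of load 3β·x*, while the optimum loads every machine to 2β·x*; the resulting competitive ratio is at least 3^α/(2^(α+2)+ε).) -/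
/-- Let α > 1, b > 0, ε > 0, x* = (b/(α−1))^(1/α), and β > 0 with
β^α ≥ 4(α−1)/ε. Then
(3βx*)^α/4 ≥ (3^α/(2^(α+2)+ε)) · ((2βx*)^α + b). -/
theorem stmt14 (α b ε : ℝ) (hα : 1 < α) (hb : 0 < b) (hε : 0 < ε)
    (β : ℝ) (hβ : 0 < β) (hβα : 4 * (α - 1) / ε ≤ β ^ α) :
    (3 * β * ((b / (α - 1)) ^ (1 / α))) ^ α / 4 ≥
      ((3 : ℝ) ^ α / ((2 : ℝ) ^ (α + 2) + ε)) *
        ((2 * β * ((b / (α - 1)) ^ (1 / α))) ^ α + b) := by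
  have hα1 : (0:ℝ) < α - 1 := by linarith
  have hα0 : α ≠ 0 := by positivity
  have hq : (0:ℝ) < b / (α - 1) := div_pos hb hα1
  set x : ℝ := (b / (α - 1)) ^ (1 / α) with hx
  have hx0 : 0 < x := Real.rpow_pos_of_pos hq _
  have hxα : x ^ α = b / (α - 1) := by
    rw [hx, ← Real.rpow_mul hq.le, one_div, inv_mul_cancel₀ hα0, Real.rpow_one]
  have h3 : (3 * β * x) ^ α = 3 ^ α * (β ^ α * x ^ α) := by
    rw [Real.mul_rpow (by positivity) hx0.le, Real.mul_rpow (by norm_num) hβ.le, mul_assoc]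
  have h2 : (2 * β * x) ^ α = 2 ^ α * (β ^ α * x ^ α) := by
    rw [Real.mul_rpow (by positivity) hx0.le, Real.mul_rpow (by norm_num) hβ.le, mul_assoc]
  set t : ℝ := β ^ α * x ^ α with ht
  have hβpos : 0 < β ^ α := Real.rpow_pos_of_pos hβ _
  have ht4 : 4 * b ≤ ε * t := by
    have : 4 * (α - 1) / ε * (b / (α - 1)) ≤ β ^ α * (b / (α - 1)) :=
      mul_le_mul_of_nonneg_right hβα hq.le
    calc 4 * b = ε * (4 * (α - 1) / ε * (b / (α - 1))) := by
            field_simp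
      _ ≤ ε * (β ^ α * (b / (α - 1))) := by
            exact mul_le_mul_of_nonneg_left this hε.le
      _ = ε * t := by rw [ht, hxα]
  have h2p : (0:ℝ) < 2 ^ (α + 2) := Real.rpow_pos_of_pos (by norm_num) _
  have h3p : (0:ℝ) < (3:ℝ) ^ α := Real.rpow_pos_of_pos (by norm_num) _
  have h2eq : (2:ℝ) ^ (α + 2) = 2 ^ α * 4 := by
    rw [Real.rpow_add (by norm_num)]; norm_num
  rw [ge_iff_le, h3, h2, div_mul_eq_mul_div, div_le_div_iff₀ (by positivity) (by norm_num)]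
  have htpos : 0 < t := by positivity
  have key : (2 ^ α * t + b) * 4 ≤ t * (2 ^ (α + 2) + ε) := by
    rw [h2eq]; nlinarith
  calc (3:ℝ) ^ α * (2 ^ α * t + b) * 4 = 3 ^ α * ((2 ^ α * t + b) * 4) := by ring
    _ ≤ 3 ^ α * (t * (2 ^ (α + 2) + ε)) := mul_le_mul_of_nonneg_left key h3p.le
    _ = 3 ^ α * t * (2 ^ (α + 2) + ε) := by ring
end

section
/- Let α > 1 and b > 0 be reals and let x* = (b/(α−1))^(1/α). Then both of the following hold: (i) ((12x*)^α + b) / (2·((6x*)^α + b)) ≥ 3^α/2^(α+1); (ii) ((18x*)^α + (6x*)^α + 2b) / (2·((12x*)^α + b)) ≥ 3^α/2^(α+1). (This is the adversarial lower bound for online (·,2)-VMA: with two VMs of load 6x*, an algorithm placing both on one machine pays (12x*)^α + b against optimum 2((6x*)^α+b) — case (i); an algorithm splitting them, after a third VM of load 12x* arrives, pays (18x*)^α + (6x*)^α + 2b against optimum 2((12x*)^α + b) — case (ii). Hence no online algorithm for (·,2)-VMA has competitive ratio below 3^α/2^(α+1).) -/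
/-- Let α > 1, b > 0 and x* = (b/(α−1))^(1/α). Then
(i) ((12x*)^α + b) / (2·((6x*)^α + b)) ≥ 3^α/2^(α+1);
(ii) ((18x*)^α + (6x*)^α + 2b) / (2·((12x*)^α + b)) ≥ 3^α/2^(α+1). -/
theorem stmt15 (α b : ℝ) (hα : 1 < α) (hb : 0 < b) :
    ((12 * ((b / (α - 1)) ^ (1 / α))) ^ α + b) /
        (2 * ((6 * ((b / (α - 1)) ^ (1 / α))) ^ α + b)) ≥
      (3 : ℝ) ^ α / (2 : ℝ) ^ (α + 1) ∧
    ((18 * ((b / (α - 1)) ^ (1 / α))) ^ α + (6 * ((b / (α - 1)) ^ (1 / α))) ^ α + 2 * b) /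
        (2 * ((12 * ((b / (α - 1)) ^ (1 / α))) ^ α + b)) ≥
      (3 : ℝ) ^ α / (2 : ℝ) ^ (α + 1) := by
  have hα1 : (0:ℝ) < α - 1 := by linarith
  have ht : 0 < b / (α - 1) := div_pos hb hα1
  set x : ℝ := (b / (α - 1)) ^ (1 / α) with hxdef
  have hx : 0 < x := Real.rpow_pos_of_pos ht _
  have hxα : x ^ α = b / (α - 1) := by
    rw [hxdef, ← Real.rpow_mul ht.le, one_div, inv_mul_cancel₀ (by linarith : α ≠ 0),
      Real.rpow_one]
  have hb' : b = (α - 1) * x ^ α := by rw [hxα]; field_simp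
  have hxp : 0 < x ^ α := Real.rpow_pos_of_pos hx α
  have hmul12 : (12 * x) ^ α = 12 ^ α * x ^ α := Real.mul_rpow (by norm_num) hx.le
  have hmul6 : (6 * x) ^ α = 6 ^ α * x ^ α := Real.mul_rpow (by norm_num) hx.le
  have hmul18 : (18 * x) ^ α = 18 ^ α * x ^ α := Real.mul_rpow (by norm_num) hx.le
  have h2 : (2:ℝ) ^ (α + 1) = 2 * 2 ^ α := by
    rw [Real.rpow_add (by norm_num : (0:ℝ) < 2), Real.rpow_one]; ring
  have h2p : (0:ℝ) < 2 ^ α := Real.rpow_pos_of_pos (by norm_num) α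
  have h3p : (0:ℝ) < 3 ^ α := Real.rpow_pos_of_pos (by norm_num) α
  have h18p : (0:ℝ) < 18 ^ α := Real.rpow_pos_of_pos (by norm_num) α
  have hA : (24:ℝ) ^ α = 18 ^ α * (4/3) ^ α := by
    rw [← Real.mul_rpow (by norm_num) (by norm_num)]; norm_num
  have hB : (18:ℝ) ^ α = 3 ^ α * 6 ^ α := by
    rw [← Real.mul_rpow (by norm_num) (by norm_num)]; norm_num
  have hC : (12:ℝ) ^ α * 2 ^ α = 24 ^ α := by
    rw [← Real.mul_rpow (by norm_num) (by norm_num)]; norm_num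
  have hD : (18:ℝ) ^ α * 2 ^ α = 36 ^ α := by
    rw [← Real.mul_rpow (by norm_num) (by norm_num)]; norm_num
  have hE : (6:ℝ) ^ α * 2 ^ α = 12 ^ α := by
    rw [← Real.mul_rpow (by norm_num) (by norm_num)]; norm_num
  have hF : (3:ℝ) ^ α * 12 ^ α = 36 ^ α := by
    rw [← Real.mul_rpow (by norm_num) (by norm_num)]; norm_num
  have hG : (12:ℝ) ^ α = 3 ^ α * 4 ^ α := by
    rw [← Real.mul_rpow (by norm_num) (by norm_num)]; norm_num
  have hBern43 : 1 + α * (1/3) ≤ ((4:ℝ)/3) ^ α := by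
    have h := one_add_mul_self_le_rpow_one_add (show (-1:ℝ) ≤ 1/3 by norm_num) hα.le
    have e : (1:ℝ) + 1/3 = 4/3 := by norm_num
    rwa [e] at h
  have hBern4 : 1 + α * 3 ≤ (4:ℝ) ^ α := by
    have h := one_add_mul_self_le_rpow_one_add (show (-1:ℝ) ≤ 3 by norm_num) hα.le
    have e : (1:ℝ) + 3 = 4 := by norm_num
    rwa [e] at h
  have h6 : (6:ℝ) ≤ 6 ^ α := by
    nth_rewrite 1 [show (6:ℝ) = 6 ^ (1:ℝ) by norm_num]
    exact Real.rpow_le_rpow_of_exponent_le (by norm_num) hα.le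
  -- key inequality (i): 18^α + (α-1)*3^α ≤ 24^α + (α-1)*2^α
  have hkey1 : (18:ℝ) ^ α + (α - 1) * 3 ^ α ≤ 24 ^ α + (α - 1) * 2 ^ α := by
    have h1 : (α - 1) * 3 ^ α ≤ 24 ^ α - 18 ^ α := by
      rw [hA, hB]
      nlinarith [mul_le_mul_of_nonneg_left hBern43 h18p.le,
        mul_le_mul_of_nonneg_right h6 (mul_pos h3p (by linarith : (0:ℝ) < α)).le]
    linarith [(mul_pos hα1 h2p)]
  -- key inequality (ii): 36^α + (α-1)*3^α ≤ 36^α + 12^α + 2*(α-1)*2^α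
  have hkey2 : (36:ℝ) ^ α + (α - 1) * 3 ^ α ≤ 36 ^ α + 12 ^ α + 2 * (α - 1) * 2 ^ α := by
    have h1 : (α - 1) * 3 ^ α ≤ 12 ^ α := by
      rw [hG]
      nlinarith [mul_le_mul_of_nonneg_left hBern4 h3p.le]
    linarith [(mul_pos hα1 h2p)]
  have htp : (0:ℝ) ≤ 2 * x ^ α := by positivity
  constructor
  · rw [ge_iff_le, div_le_div_iff₀ (by positivity) (by positivity), hmul12, hmul6, h2, hb']
    refine le_trans (le_of_eq ?_)
      (le_trans (mul_le_mul_of_nonneg_left hkey1 htp) (le_of_eq ?_))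
    · rw [hB]; ring
    · rw [← hC]; ring
  · rw [ge_iff_le, div_le_div_iff₀ (by positivity) (by positivity), hmul12, hmul6, hmul18, h2, hb']
    refine le_trans (le_of_eq ?_)
      (le_trans (mul_le_mul_of_nonneg_left hkey2 htp) (le_of_eq ?_))
    · rw [← hF]; ring
    · rw [← hD, ← hE]; ring
end

section
/- Let α > 1 and b > 0 be reals, let x* = (b/(α−1))^(1/α) and φ* = ((x*)^α + b)/x*. Let D be a finite set, ℓ : D → ℝ a function with ℓ(d) > 0 for all d ∈ D, and let P = {A₁, …, A_m} be any partition of D. Writing ℓ(A) = Σ_{d∈A} ℓ(d), it holds that Σ_{i : A_i ≠ ∅} (ℓ(A_i)^α + b) ≥ Σ_{d ∈ D, ℓ(d) ≥ x*} (ℓ(d)^α + b) + φ* · Σ_{d ∈ D, ℓ(d) < x*} ℓ(d). (The power of any assignment is at least the sum, over VMs of load at least x*, of their stand-alone machine costs, plus the optimal power rate times the total load of the VMs smaller than x*.) -/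
/-!
Write x for the optimal load, so that b = (α - 1) x^α and φ* = α x^(α-1) is the slope of
y ↦ y^α at x. Everything follows from the tangent-line inequality for y ↦ y^α: it gives
φ* t ≤ t^α + b for all t ≥ 0, u^α + φ* t ≤ (u + t)^α for u ≥ x, and
u^α + v^α + b ≤ (u + v)^α for u, v ≥ x. Merging the big VMs of one part one at a time, the
cost of the part dominates the stand-alone costs of its big VMs plus φ* times its small load;
summing over the parts gives the claim.
-/

open Finset

theorem rpow_tangent_line_le {p y z : ℝ} (hp : 1 ≤ p) (hy : 0 < y) (hz : 0 ≤ z) :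
    y ^ p + p * y ^ (p - 1) * (z - y) ≤ z ^ p := by
  obtain ⟨s, rfl⟩ : ∃ s, z = y * (1 + s) := ⟨(z - y) / y, by field_simp; ring⟩
  have hs : -1 ≤ s := by nlinarith
  have hy_pow : y ^ (p - 1) * y = y ^ p := by
    rw [← Real.rpow_add_one hy.ne', sub_add_cancel]
  calc y ^ p + p * y ^ (p - 1) * (y * (1 + s) - y) = (1 + p * s) * y ^ p := by
        rw [← hy_pow]; ring
    _ ≤ (1 + s) ^ p * y ^ p := by
        gcongr; exact one_add_mul_self_le_rpow_one_add hs hp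
    _ = (y * (1 + s)) ^ p := by rw [Real.mul_rpow hy.le (by linarith), mul_comm]

section OptimalLoad

variable {α b x : ℝ}

theorem rate_mul_le_rpow_add (hα : 1 ≤ α) (hx : 0 < x) (hb : (α - 1) * x ^ α = b)
    {t : ℝ} (ht : 0 ≤ t) : α * x ^ (α - 1) * t ≤ t ^ α + b := by
  have hx_pow : x ^ (α - 1) * x = x ^ α := by
    rw [← Real.rpow_add_one hx.ne', sub_add_cancel]
  have := rpow_tangent_line_le hα hx ht
  nlinarith

theorem rpow_add_rate_mul_le (hα : 1 ≤ α) (hx : 0 < x) {u t : ℝ} (hu : x ≤ u) (ht : 0 ≤ t) :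
    u ^ α + α * x ^ (α - 1) * t ≤ (u + t) ^ α :=
  calc u ^ α + α * x ^ (α - 1) * t ≤ u ^ α + α * u ^ (α - 1) * (u + t - u) := by
        rw [add_sub_cancel_left]; gcongr
    _ ≤ (u + t) ^ α := rpow_tangent_line_le hα (hx.trans_le hu) (by linarith)

theorem rpow_add_rpow_add_le (hα : 1 ≤ α) (hx : 0 < x) (hb : (α - 1) * x ^ α = b) {u v : ℝ}
    (hu : x ≤ u) (hv : x ≤ v) : u ^ α + v ^ α + b ≤ (u + v) ^ α := by
  wlog hvu : v ≤ u generalizing u v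
  · rw [add_comm u, add_comm (u ^ α)]; exact this hv hu (by linarith)
  have hv0 : 0 < v := hx.trans_le hv
  have hv_pow : v ^ (α - 1) * v = v ^ α := by
    rw [← Real.rpow_add_one hv0.ne', sub_add_cancel]
  have hxv : x ^ α ≤ v ^ α := by gcongr
  have := rpow_add_rate_mul_le hα hv0 hvu hv0.le
  nlinarith

theorem sum_rpow_add_add_rate_mul_le {ι : Type*} (hα : 1 ≤ α) (hx : 0 < x)
    (hb : (α - 1) * x ^ α = b) {ℓ : ι → ℝ} {B : Finset ι} (hB : B.Nonempty)
    (hBx : ∀ d ∈ B, x ≤ ℓ d) {t : ℝ} (ht : 0 ≤ t) :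
    ∑ d ∈ B, (ℓ d ^ α + b) + α * x ^ (α - 1) * t ≤ (∑ d ∈ B, ℓ d + t) ^ α + b := by
  induction hB using Finset.Nonempty.cons_induction with
  | singleton a =>
    simp only [sum_singleton]
    linarith [rpow_add_rate_mul_le hα hx (hBx a (mem_singleton_self a)) ht]
  | cons a s _ hs ih =>
    simp only [mem_cons, forall_eq_or_imp] at hBx
    obtain ⟨e, he⟩ := hs
    have hrest : x ≤ ∑ d ∈ s, ℓ d + t := by
      have := single_le_sum (fun d hd => hx.le.trans (hBx.2 d hd)) he
      linarith [hBx.2 e he]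
    rw [sum_cons, sum_cons, add_assoc (ℓ a)]
    linarith [ih hBx.2, rpow_add_rpow_add_le hα hx hb hBx.1 hrest]

theorem sum_filter_le_add_rate_mul_sum_filter_lt_le {ι : Type*} (hα : 1 ≤ α) (hx : 0 < x)
    (hb : (α - 1) * x ^ α = b) {ℓ : ι → ℝ} {A : Finset ι} (hA : ∀ d ∈ A, 0 ≤ ℓ d) :
    ∑ d ∈ A.filter (fun d => x ≤ ℓ d), (ℓ d ^ α + b) +
        α * x ^ (α - 1) * ∑ d ∈ A.filter (fun d => ℓ d < x), ℓ d ≤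
      (∑ d ∈ A, ℓ d) ^ α + b := by
  have hsplit := sum_filter_add_sum_filter_not A (fun d => x ≤ ℓ d) ℓ
  simp only [not_le] at hsplit
  have ht : 0 ≤ ∑ d ∈ A.filter (fun d => ℓ d < x), ℓ d :=
    sum_nonneg fun d hd => hA d (mem_filter.1 hd).1
  rcases (A.filter (fun d => x ≤ ℓ d)).eq_empty_or_nonempty with hB | hB
  · rw [hB, sum_empty, zero_add] at hsplit ⊢
    rw [← hsplit]
    exact rate_mul_le_rpow_add hα hx hb ht
  · rw [← hsplit]
    exact sum_rpow_add_add_rate_mul_le hα hx hb hB (fun d hd => (mem_filter.1 hd).2) ht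

end OptimalLoad

theorem stmt16_general {ι : Type*} (α b : ℝ) (hα : 1 < α) (hb : 0 < b)
    (D : Finset ι) (ℓ : ι → ℝ) (hℓ : ∀ d ∈ D, 0 < ℓ d)
    (m : ℕ) (A : Fin m → Finset ι)
    (hdisj : ∀ i j, i ≠ j → Disjoint (A i) (A j))
    (hcover : ∀ d ∈ D, ∃ i, d ∈ A i) (hsub : ∀ i, A i ⊆ D) :
    ∑ i ∈ Finset.univ.filter (fun i => (A i).Nonempty), ((∑ d ∈ A i, ℓ d) ^ α + b) ≥
      (∑ d ∈ D.filter (fun d => (b / (α - 1)) ^ (1 / α) ≤ ℓ d), (ℓ d ^ α + b)) +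
        ((((b / (α - 1)) ^ (1 / α)) ^ α + b) / ((b / (α - 1)) ^ (1 / α))) *
          ∑ d ∈ D.filter (fun d => ℓ d < (b / (α - 1)) ^ (1 / α)), ℓ d := by
  classical
  have hb_div : 0 < b / (α - 1) := div_pos hb (by linarith)
  have hx_pow : ((b / (α - 1)) ^ (1 / α)) ^ α = b / (α - 1) := by
    rw [one_div, Real.rpow_inv_rpow hb_div.le (by linarith)]
  set x := (b / (α - 1)) ^ (1 / α)
  have hx : 0 < x := Real.rpow_pos_of_pos hb_div _
  have hbx : (α - 1) * x ^ α = b := by rw [hx_pow, mul_div_cancel₀ _ (by linarith)]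
  have hrate : (x ^ α + b) / x = α * x ^ (α - 1) := by
    rw [Real.rpow_sub_one hx.ne', ← hbx]; ring
  set N := univ.filter (fun i => (A i).Nonempty)
  have hD : D = N.biUnion A := by
    ext d
    simp only [mem_biUnion, N, mem_filter, mem_univ, true_and]
    exact ⟨fun hd => (hcover d hd).imp fun i hi => ⟨⟨d, hi⟩, hi⟩,
      fun ⟨i, _, hi⟩ => hsub i hi⟩
  have hsum_parts : ∀ (p : ι → Prop) [DecidablePred p] (g : ι → ℝ),
      ∑ d ∈ D.filter p, g d = ∑ i ∈ N, ∑ d ∈ (A i).filter p, g d := fun p _ g => by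
    rw [hD, filter_biUnion, sum_biUnion fun i _ j _ hij =>
      disjoint_filter_filter (hdisj i j hij)]
  rw [hrate, hsum_parts, hsum_parts, mul_sum, ← sum_add_distrib, ge_iff_le]
  exact sum_le_sum fun i _ => sum_filter_le_add_rate_mul_sum_filter_lt_le hα.le hx hbx
    fun d hd => (hℓ d (hsub i hd)).le

/-- Let α > 1, b > 0, x* = (b/(α−1))^(1/α) and
φ* = ((x*)^α + b)/x*. For any finite set D of VMs with positive loads ℓ and any
partition A₁, …, A_m of D (pairwise disjoint parts covering D), the power of the
partition is at least the sum of the stand-alone costs of the VMs with load ≥ x*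
plus φ* times the total load of the VMs with load < x*. -/
theorem stmt16 {ι : Type*} [DecidableEq ι] (α b : ℝ) (hα : 1 < α) (hb : 0 < b)
    (D : Finset ι) (ℓ : ι → ℝ) (hℓ : ∀ d ∈ D, 0 < ℓ d)
    (m : ℕ) (A : Fin m → Finset ι)
    (hdisj : ∀ i j, i ≠ j → Disjoint (A i) (A j))
    (hcover : ∀ d ∈ D, ∃ i, d ∈ A i) (hsub : ∀ i, A i ⊆ D) :
    ∑ i ∈ Finset.univ.filter (fun i => (A i).Nonempty), ((∑ d ∈ A i, ℓ d) ^ α + b) ≥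
      (∑ d ∈ D.filter (fun d => (b / (α - 1)) ^ (1 / α) ≤ ℓ d), (ℓ d ^ α + b)) +
        ((((b / (α - 1)) ^ (1 / α)) ^ α + b) / ((b / (α - 1)) ^ (1 / α))) *
          ∑ d ∈ D.filter (fun d => ℓ d < (b / (α - 1)) ^ (1 / α)), ℓ d :=
  stmt16_general α b hα hb D ℓ hℓ m A hdisj hcover hsub
end

section
/- Let α > 1 and b > 0 be reals. For all reals x > 0 and y > 0 with x + y < 2·(b/(2^α − 2))^(1/α), it holds that (x+y)^α + b < (x^α + b) + (y^α + b). (Hence, in (·,2)-VMA, whenever the total load is below 2·(b/(2^α−2))^(1/α), assigning all VMs to a single machine consumes strictly less power than any split over the two machines; this justifies both the threshold used by the online algorithm for (·,2)-VMA and the characterization of the optimal offline solution in that range.) -/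
/-- Let α > 1 and b > 0. For all x, y > 0 with
x + y < 2·(b/(2^α − 2))^(1/α), it holds that
(x+y)^α + b < (x^α + b) + (y^α + b). -/
theorem stmt18 (α b : ℝ) (hα : 1 < α) (hb : 0 < b)
    (x y : ℝ) (hx : 0 < x) (hy : 0 < y)
    (hxy : x + y < 2 * ((b / ((2 : ℝ) ^ α - 2)) ^ (1 / α))) :
    (x + y) ^ α + b < (x ^ α + b) + (y ^ α + b) := by
  have h2 : (2 : ℝ) < 2 ^ α := by
    nth_rewrite 1 [show (2 : ℝ) = 2 ^ (1 : ℝ) by norm_num]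
    exact Real.rpow_lt_rpow_of_exponent_lt one_lt_two hα
  have hden : (0 : ℝ) < 2 ^ α - 2 := by linarith
  have hc : (0 : ℝ) < b / (2 ^ α - 2) := div_pos hb hden
  have hα0 : α ≠ 0 := by positivity
  have ht : ((b / ((2 : ℝ) ^ α - 2)) ^ (1 / α)) ^ α = b / ((2 : ℝ) ^ α - 2) := by
    rw [one_div, Real.rpow_inv_rpow hc.le hα0]
  have hs : (0 : ℝ) < x + y := by linarith
  -- upper bound on (x+y)^α
  have hsα : (x + y) ^ α < 2 ^ α * (b / (2 ^ α - 2)) := by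
    calc (x + y) ^ α < (2 * ((b / ((2 : ℝ) ^ α - 2)) ^ (1 / α))) ^ α :=
          Real.rpow_lt_rpow hs.le hxy (by linarith)
      _ = 2 ^ α * (b / ((2 : ℝ) ^ α - 2)) := by
          rw [Real.mul_rpow (by norm_num) (Real.rpow_nonneg hc.le _), ht]
  -- power mean inequality
  have hpm : ((x + y) / 2) ^ α ≤ (x ^ α + y ^ α) / 2 := by
    have h := (convexOn_rpow hα.le).2 (Set.mem_Ici.mpr hx.le)
      (Set.mem_Ici.mpr hy.le) (by norm_num : (0:ℝ) ≤ 1/2)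
      (by norm_num : (0:ℝ) ≤ 1/2) (by norm_num)
    simp only [smul_eq_mul] at h
    calc ((x + y) / 2) ^ α = (1/2 * x + 1/2 * y) ^ α := by ring_nf
      _ ≤ 1/2 * x ^ α + 1/2 * y ^ α := h
      _ = (x ^ α + y ^ α) / 2 := by ring
  have hsplit : (x + y) ^ α = 2 ^ α * ((x + y) / 2) ^ α := by
    rw [← Real.mul_rpow (by norm_num) (by positivity)]
    ring_nf
  -- combine
  have hApos : (0 : ℝ) < 2 ^ α := by linarith
  have key : (x + y) ^ α * (2 ^ α - 2) < 2 ^ α * b := by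
    have := mul_lt_mul_of_pos_right hsα hden
    calc (x + y) ^ α * (2 ^ α - 2) < 2 ^ α * (b / (2 ^ α - 2)) * (2 ^ α - 2) := this
      _ = 2 ^ α * b := by field_simp
  have hpm' : 2 * (x + y) ^ α ≤ 2 ^ α * (x ^ α + y ^ α) := by
    rw [hsplit]; nlinarith [hpm, hApos]
  nlinarith [key, hpm', hApos]
end
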